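/- Let g be a ground truth and p, q predictions of length n, and let α, β be as specified. Suppose A ∈ I_1(g), p_A^{-1}(1) ≠ ∅, I ⊆ A with p ≡ 0 on I and min I > max{i ∈ A : p(i) = 1}, q(i) = 1 for i ∈ I and q(i) = p(i) for i ∉ I, and |I_1(q_A)| = |I_1(p_A)| + 1. Then LARM(g,p) > LARM(g,q). (LARM satisfies the Redundant Alarms property.) -/

import Mathlib

namespace TSAD

open Finset

/-- The index domain `{1, …, n}`. -/
def dom (n : ℕ) : Finset ℕ := Finset.Icc 1 n

/-- The interval `[l, u]` represented by a pair. -/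
def ivl (W : ℕ × ℕ) : Finset ℕ := Finset.Icc W.1 W.2

/-- The positions in `A` where the binary sequence `s` takes the value `1` (`true`). -/
def ones (A : Finset ℕ) (s : ℕ → Bool) : Finset ℕ := A.filter (fun i => s i = true)

/-- `runs A s v` is the set of maximal intervals `[l, u] ⊆ A` on which `s` is constantly `v`
(maximal among intervals contained in `A`).  For `A = dom n` this is `I_v(s)`;
for `A ⊆ dom n` it is `I_v(s_A)`. -/
def runs (A : Finset ℕ) (s : ℕ → Bool) (v : Bool) : Finset (ℕ × ℕ) :=
  (A ×ˢ A).filter (fun W =>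
    W.1 ≤ W.2 ∧ ivl W ⊆ A ∧ (∀ i ∈ ivl W, s i = v) ∧
    (W.1 - 1 ∈ A → s (W.1 - 1) ≠ v) ∧ (W.2 + 1 ∈ A → s (W.2 + 1) ≠ v))

/-- Specification of the function `α` used in the (A)LARM scores: it assigns to each
restriction `p_A` a value in `[0,1)`, depends only on the restriction, strictly increases
when a single `0` of `p_A` is changed to a `1`, satisfies alarm timing, and early bias. -/
structure AlphaSpec (α : Finset ℕ → (ℕ → Bool) → ℝ) : Prop where
  mem_Ico : ∀ A p, α A p ∈ Set.Ico (0 : ℝ) 1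
  restrict : ∀ A (p q : ℕ → Bool), (∀ i ∈ A, p i = q i) → α A p = α A q
  mono : ∀ A (p q : ℕ → Bool) (i : ℕ), i ∈ A → p i = true → q i = false →
    (∀ j, j ≠ i → p j = q j) → α A q < α A p
  timing : ∀ A (p q : ℕ → Bool), (ones A p).card = (ones A q).card →
    ∀ (hp : (ones A p).Nonempty) (hq : (ones A q).Nonempty),
      (ones A p).min' hp < (ones A q).min' hq → α A q < α A p
  earlyBias : ∀ A (p q : ℕ → Bool) (i j : ℕ), i ∈ A → j ∈ A → i < j →
    p i = true → p j = false → q i = false → q j = true →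
    (∀ k, k ≠ i → k ≠ j → p k = q k) → α A q < α A p

/-- Specification of the function `β` used in the (A)LARM scores: strictly increasing
with values in `[0,1]`. -/
structure BetaSpec (β : ℕ → ℝ) : Prop where
  mem_Icc : ∀ k, β k ∈ Set.Icc (0 : ℝ) 1
  strictMono : StrictMono β

/-- The LARM score. -/
noncomputable def LARM (n : ℕ) (α : Finset ℕ → (ℕ → Bool) → ℝ) (β : ℕ → ℝ)
    (g p : ℕ → Bool) : ℝ :=
  (1 / ((runs (dom n) g true).card : ℝ)) *
    ∑ A ∈ (runs (dom n) g true).filter (fun A => 0 < (runs (ivl A) p true).card),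
      (α (ivl A) p + 1) / 2 ^ ((runs (ivl A) p true).card)
  - 2 * ∑ N ∈ runs (dom n) g false, ((runs (ivl N) p true).card : ℝ)
  - ∑ N ∈ runs (dom n) g false, β ((ones (ivl N) p).card)

/-- `I_{01}(g)`: intervals that are a maximal `0`-run immediately followed by a maximal
`1`-run. -/
def runs01 (n : ℕ) (g : ℕ → Bool) : Finset (ℕ × ℕ) :=
  ((dom n) ×ˢ (dom n)).filter (fun W =>
    ∃ b ∈ Finset.Ico W.1 W.2,
      (W.1, b) ∈ runs (dom n) g false ∧ (b + 1, W.2) ∈ runs (dom n) g true)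

/-- `I_{10}(g)`: intervals that are a maximal `1`-run immediately followed by a maximal
`0`-run. -/
def runs10 (n : ℕ) (g : ℕ → Bool) : Finset (ℕ × ℕ) :=
  ((dom n) ×ˢ (dom n)).filter (fun W =>
    ∃ b ∈ Finset.Ico W.1 W.2,
      (W.1, b) ∈ runs (dom n) g true ∧ (b + 1, W.2) ∈ runs (dom n) g false)

/-- Early alarms `EA(p,g)`. -/
def EA (n : ℕ) (p g : ℕ → Bool) : Finset (ℕ × ℕ) :=
  ((dom n) ×ˢ (dom n)).filter (fun A =>
    (∃ I ∈ runs01 n g, A ∈ runs (ivl I) p true) ∧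
    (∃ i ∈ ivl A, g i = true) ∧ (∃ i ∈ ivl A, g i = false))

/-- Late alarms `LA(p,g)`. -/
def LA (n : ℕ) (p g : ℕ → Bool) : Finset (ℕ × ℕ) :=
  ((dom n) ×ˢ (dom n)).filter (fun A =>
    (∃ I ∈ runs10 n g, A ∈ runs (ivl I) p true) ∧
    (∃ i ∈ ivl A, g i = true) ∧ (∃ i ∈ ivl A, g i = false))

/-- True false alarms `TA(p,g)`. -/
def TA (n : ℕ) (p g : ℕ → Bool) : Finset (ℕ × ℕ) :=
  (runs (dom n) p true).filter (fun A =>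
    (∀ i ∈ ivl A, g i = false) ∧
    ∀ B ∈ EA n p g ∪ LA n p g, ¬ ivl A ⊆ ivl B)

/-- Detected anomalies `DA(p,g)`. -/
def DA (n : ℕ) (p g : ℕ → Bool) : Finset (ℕ × ℕ) :=
  (runs (dom n) g true).filter (fun A =>
    ∃ B ∈ runs (dom n) p true,
      (ivl B ∩ ivl A).Nonempty ∧
      (B.1 ∈ ivl A ∨ ∀ i ∈ Finset.Ico B.1 A.1, g i = false))

/-- The ALARM score with alarm tolerance `t` (the averaged term is `0` when
`DA(p,g) = ∅`, since in Lean `0 / 0 = 0`). -/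
noncomputable def ALARM (n t : ℕ) (α : Finset ℕ → (ℕ → Bool) → ℝ) (β : ℕ → ℝ)
    (g p : ℕ → Bool) : ℝ :=
  ((DA n p g).card : ℝ)
  + (∑ A ∈ DA n p g, (α (ivl A) p + 1) / 2 ^ ((runs (ivl A) p true).card)) /
      ((DA n p g).card : ℝ)
  - β (((dom n).filter (fun i => p i = true ∧ g i = false)).card)
  - (1 / (t : ℝ)) * (((TA n p g).card : ℝ) + (3 / 2) * ((EA n p g).card : ℝ)
      + (1 / 2) * ((LA n p g).card : ℝ))

/-- Point-wise Recall. -/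
noncomputable def recallPW (n : ℕ) (g p : ℕ → Bool) : ℝ :=
  (((dom n).filter (fun i => p i = true ∧ g i = true)).card : ℝ) /
    ((ones (dom n) g).card : ℝ)

/-- Point-wise F1-score. -/
noncomputable def f1PW (n : ℕ) (g p : ℕ → Bool) : ℝ :=
  2 * (((dom n).filter (fun i => p i = true ∧ g i = true)).card : ℝ) /
    (((ones (dom n) p).card : ℝ) + ((ones (dom n) g).card : ℝ))

/-- Total length of the ground-truth anomaly windows hit by `p`. -/
def Spa (n : ℕ) (g p : ℕ → Bool) : ℕ :=
  ∑ W ∈ (runs (dom n) g true).filter (fun W => ∃ i ∈ ivl W, p i = true), (ivl W).card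

/-- Point-adjusted Recall. -/
noncomputable def recallPA (n : ℕ) (g p : ℕ → Bool) : ℝ :=
  ((Spa n g p : ℝ)) / ((ones (dom n) g).card : ℝ)

/-- Point-adjusted F1-score. -/
noncomputable def f1PA (n : ℕ) (g p : ℕ → Bool) : ℝ :=
  2 * (Spa n g p : ℝ) /
    ((Spa n g p : ℝ) + (((dom n).filter (fun i => p i = true ∧ g i = false)).card : ℝ)
      + ((ones (dom n) g).card : ℝ))

/-- Point-wise Precision. -/
noncomputable def precisionPW (n : ℕ) (g p : ℕ → Bool) : ℝ :=
  (((dom n).filter (fun i => p i = true ∧ g i = true)).card : ℝ) /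
    ((ones (dom n) p).card : ℝ)

/-- Event-wise Recall. -/
noncomputable def recallEvent (n : ℕ) (g p : ℕ → Bool) : ℝ :=
  (((runs (dom n) g true).filter (fun W => ∃ i ∈ ivl W, p i = true)).card : ℝ) /
    ((runs (dom n) g true).card : ℝ)

/-- Composite F1-score. -/
noncomputable def Fc1 (n : ℕ) (g p : ℕ → Bool) : ℝ :=
  2 * precisionPW n g p * recallEvent n g p / (precisionPW n g p + recallEvent n g p)

/-- Distance from `i` to the closest element of `S`. -/
noncomputable def minDist (i : ℕ) (S : Finset ℕ) : ℕ :=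
  sInf {d : ℕ | ∃ j ∈ S, d = ((i : ℤ) - (j : ℤ)).natAbs}

/-- Temporal Distance. -/
noncomputable def TD (n : ℕ) (g p : ℕ → Bool) : ℕ :=
  ∑ i ∈ ones (dom n) g, minDist i (ones (dom n) p)
  + ∑ i ∈ ones (dom n) p, minDist i (ones (dom n) g)

/-- The set of ground-truth anomaly windows hit by `p`. -/
def Dset (n : ℕ) (g p : ℕ → Bool) : Finset (ℕ × ℕ) :=
  (runs (dom n) g true).filter (fun W => ∃ i ∈ ivl W, p i = true)

/-- Delay of the first alarm of `p` within the window `W`. -/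
noncomputable def delay (p : ℕ → Bool) (W : ℕ × ℕ) : ℕ :=
  sInf {i : ℕ | i ∈ ivl W ∧ p i = true} - W.1

/-- Average Alert Delay. -/
noncomputable def AAD (n : ℕ) (g p : ℕ → Bool) : ℝ :=
  (∑ W ∈ Dset n g p, (delay p W : ℝ)) / ((Dset n g p).card : ℝ)


lemma mem_runs' {A : Finset ℕ} {s : ℕ → Bool} {v : Bool} {W : ℕ × ℕ}
    (hW : W ∈ runs A s v) :
    W.1 ≤ W.2 ∧ ivl W ⊆ A ∧ (∀ i ∈ ivl W, s i = v) ∧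
      (W.1 - 1 ∈ A → s (W.1 - 1) ≠ v) ∧ (W.2 + 1 ∈ A → s (W.2 + 1) ≠ v) := by
  simpa [runs] using (Finset.mem_filter.mp hW).2

lemma runs_subset_congr {A : Finset ℕ} {p q : ℕ → Bool} (h : ∀ i ∈ A, p i = q i) (v : Bool) :
    runs A p v ⊆ runs A q v := by
  intro W hW
  simp only [runs, Finset.mem_filter] at hW ⊢
  obtain ⟨hmem, h1, h2, h3, h4, h5⟩ := hW
  exact ⟨hmem, h1, h2, fun i hi => (h i (h2 hi)).symm.trans (h3 i hi),
    fun hm => (h _ hm) ▸ h4 hm, fun hm => (h _ hm) ▸ h5 hm⟩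

lemma runs_congr {A : Finset ℕ} {p q : ℕ → Bool} (h : ∀ i ∈ A, p i = q i) (v : Bool) :
    runs A p v = runs A q v :=
  Finset.Subset.antisymm (runs_subset_congr h v)
    (runs_subset_congr (fun i hi => (h i hi).symm) v)

lemma ones_congr {A : Finset ℕ} {p q : ℕ → Bool} (h : ∀ i ∈ A, p i = q i) :
    ones A p = ones A q := by
  unfold ones
  apply Finset.filter_congr
  intro i hi
  rw [h i hi]

/-- Two maximal runs that intersect are equal. -/
lemma runs_eq_of_inter {A : Finset ℕ} {s : ℕ → Bool} {v : Bool} {B C : ℕ × ℕ}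
    (hB : B ∈ runs A s v) (hC : C ∈ runs A s v) {j : ℕ}
    (hjB : j ∈ ivl B) (hjC : j ∈ ivl C) : B = C := by
  obtain ⟨hB1, hB2, hB3, hB4, hB5⟩ := mem_runs' hB
  obtain ⟨hC1, hC2, hC3, hC4, hC5⟩ := mem_runs' hC
  simp only [ivl, Finset.mem_Icc] at hjB hjC
  have hfst : B.1 = C.1 := by
    rcases lt_trichotomy B.1 C.1 with h | h | h
    · exfalso
      have hmem : C.1 - 1 ∈ ivl B := by
        simp only [ivl, Finset.mem_Icc]
        omega
      exact hC4 (hB2 hmem) (hB3 _ hmem)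
    · exact h
    · exfalso
      have hmem : B.1 - 1 ∈ ivl C := by
        simp only [ivl, Finset.mem_Icc]
        omega
      exact hB4 (hC2 hmem) (hC3 _ hmem)
  have hsnd : B.2 = C.2 := by
    rcases lt_trichotomy B.2 C.2 with h | h | h
    · exfalso
      have hmem : B.2 + 1 ∈ ivl C := by
        simp only [ivl, Finset.mem_Icc]
        omega
      exact hB5 (hC2 hmem) (hC3 _ hmem)
    · exact h
    · exfalso
      have hmem : C.2 + 1 ∈ ivl B := by
        simp only [ivl, Finset.mem_Icc]
        omega
      exact hC5 (hB2 hmem) (hB3 _ hmem)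
  exact Prod.ext hfst hsnd

/-- If `p` has a `1` inside `Icc a b`, then there is a maximal `1`-run. -/
lemma runs_nonempty_of_ones {a b : ℕ} {p : ℕ → Bool} {i : ℕ} (ha : 1 ≤ a)
    (hi : i ∈ Finset.Icc a b) (hpi : p i = true) :
    (runs (Finset.Icc a b) p true).Nonempty := by
  simp only [Finset.mem_Icc] at hi
  set SU : Finset ℕ := (Finset.Icc i b).filter (fun u => ∀ j ∈ Finset.Icc i u, p j = true)
    with hSU
  set SL : Finset ℕ := (Finset.Icc a i).filter (fun l => ∀ j ∈ Finset.Icc l i, p j = true)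
    with hSL
  have hSUne : SU.Nonempty := by
    refine ⟨i, ?_⟩
    simp only [hSU, Finset.mem_filter, Finset.mem_Icc]
    refine ⟨⟨le_rfl, hi.2⟩, fun j hj => ?_⟩
    have : j = i := le_antisymm hj.2 hj.1
    rwa [this]
  have hSLne : SL.Nonempty := by
    refine ⟨i, ?_⟩
    simp only [hSL, Finset.mem_filter, Finset.mem_Icc]
    refine ⟨⟨hi.1, le_rfl⟩, fun j hj => ?_⟩
    have : j = i := le_antisymm hj.2 hj.1
    rwa [this]
  set u := SU.max' hSUne with hu
  set l := SL.min' hSLne with hl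
  have hu_mem : u ∈ SU := Finset.max'_mem _ _
  have hl_mem : l ∈ SL := Finset.min'_mem _ _
  simp only [hSU, Finset.mem_filter, Finset.mem_Icc] at hu_mem
  simp only [hSL, Finset.mem_filter, Finset.mem_Icc] at hl_mem
  obtain ⟨⟨hiu, hub⟩, hup⟩ := hu_mem
  obtain ⟨⟨hal, hli⟩, hlp⟩ := hl_mem
  refine ⟨(l, u), ?_⟩
  have hsub : ivl (l, u) ⊆ Finset.Icc a b := by
    intro x hx
    simp only [ivl, Finset.mem_Icc] at hx ⊢
    omega
  have hval : ∀ j ∈ ivl (l, u), p j = true := by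
    intro j hj
    simp only [ivl, Finset.mem_Icc] at hj
    rcases le_or_gt j i with h | h
    · exact hlp j ⟨hj.1, h⟩
    · exact hup j ⟨h.le, hj.2⟩
  simp only [runs, Finset.mem_filter, Finset.mem_product]
  refine ⟨⟨Finset.mem_Icc.mpr ⟨by omega, by omega⟩, Finset.mem_Icc.mpr ⟨by omega, by omega⟩⟩,
    by omega, hsub, hval, ?_, ?_⟩
  · intro hm hv
    simp only [Finset.mem_Icc] at hm
    have hl1 : l - 1 ∈ SL := by
      simp only [hSL, Finset.mem_filter, Finset.mem_Icc]
      refine ⟨⟨hm.1, by omega⟩, fun j hj => ?_⟩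
      rcases eq_or_lt_of_le hj.1 with h | h
      · rw [← h]; exact hv
      · exact hlp j ⟨by omega, hj.2⟩
    have := Finset.min'_le _ _ hl1
    omega
  · intro hm hv
    simp only [Finset.mem_Icc] at hm
    have hu1 : u + 1 ∈ SU := by
      simp only [hSU, Finset.mem_filter, Finset.mem_Icc]
      refine ⟨⟨by omega, hm.2⟩, fun j hj => ?_⟩
      rcases eq_or_lt_of_le hj.2 with h | h
      · rw [h]; exact hv
      · exact hup j ⟨hj.1, by omega⟩
    have := Finset.le_max' _ _ hu1
    omega

/-- LARM satisfies the Redundant Alarms property (Property 2). -/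
theorem larm_redundant_alarms (n : ℕ) (hn : 1 ≤ n)
    (α : Finset ℕ → (ℕ → Bool) → ℝ) (β : ℕ → ℝ)
    (hα : AlphaSpec α) (hβ : BetaSpec β)
    (g p q : ℕ → Bool) (A : ℕ × ℕ) (hA : A ∈ runs (dom n) g true)
    (hones : (ones (ivl A) p).Nonempty)
    (I : Finset ℕ) (hIA : I ⊆ ivl A) (hIne : I.Nonempty)
    (hpI : ∀ i ∈ I, p i = false)
    (hminmax : (ones (ivl A) p).max' hones < I.min' hIne)
    (hqI : ∀ i ∈ I, q i = true)
    (hqO : ∀ i ∈ dom n, i ∉ I → q i = p i)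
    (hcard : (runs (ivl A) q true).card = (runs (ivl A) p true).card + 1) :
    LARM n α β g p > LARM n α β g q := by
  classical
  obtain ⟨hA1, hA2, hA3, _, _⟩ := mem_runs' hA
  have hA1dom : A.1 ∈ dom n := (Finset.mem_product.mp (Finset.mem_filter.mp hA).1).1
  have hA1ge : 1 ≤ A.1 := (Finset.mem_Icc.mp hA1dom).1
  obtain ⟨i0, hi0⟩ := hones
  simp only [ones, Finset.mem_filter] at hi0
  have hrunsp : (runs (ivl A) p true).Nonempty :=
    runs_nonempty_of_ones hA1ge hi0.1 hi0.2
  set k := (runs (ivl A) p true).card with hk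
  have hkpos : 0 < k := Finset.card_pos.mpr hrunsp
  -- q agrees with p on every false run of g
  have hfalse : ∀ N ∈ runs (dom n) g false, ∀ i ∈ ivl N, q i = p i := by
    intro N hN i hi
    obtain ⟨_, hN2, hN3, _, _⟩ := mem_runs' hN
    refine hqO i (hN2 hi) fun hiI => ?_
    have h1 := hA3 i (hIA hiI)
    have h2 := hN3 i hi
    simp [h1] at h2
  -- q agrees with p on every true run of g other than A
  have hother : ∀ B ∈ runs (dom n) g true, B ≠ A → ∀ i ∈ ivl B, q i = p i := by
    intro B hB hne i hi
    obtain ⟨_, hB2, _, _, _⟩ := mem_runs' hB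
    refine hqO i (hB2 hi) fun hiI => ?_
    exact hne (runs_eq_of_inter hB hA hi (hIA hiI))
  -- penalty sums are equal
  have hpen1 : ∑ N ∈ runs (dom n) g false, ((runs (ivl N) q true).card : ℝ)
      = ∑ N ∈ runs (dom n) g false, ((runs (ivl N) p true).card : ℝ) :=
    Finset.sum_congr rfl (fun N hN => by rw [runs_congr (hfalse N hN) true])
  have hpen2 : ∑ N ∈ runs (dom n) g false, β ((ones (ivl N) q).card)
      = ∑ N ∈ runs (dom n) g false, β ((ones (ivl N) p).card) :=
    Finset.sum_congr rfl (fun N hN => by rw [ones_congr (hfalse N hN)])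
  -- the strict inequality at the window A
  have hstrict : (α (ivl A) q + 1) / 2 ^ ((runs (ivl A) q true).card)
      < (α (ivl A) p + 1) / 2 ^ k := by
    rw [hcard]
    have hαq := (hα.mem_Ico (ivl A) q).2
    have hαp := (hα.mem_Ico (ivl A) p).1
    have h2k : (0 : ℝ) < 2 ^ k := by positivity
    rw [div_lt_div_iff₀ (by positivity) (by positivity), pow_succ]
    nlinarith [mul_pos (show (0 : ℝ) < 2 * α (ivl A) p + 1 - α (ivl A) q by linarith) h2k]
  -- comparison of the main sums
  have hsum : ∑ B ∈ (runs (dom n) g true).filter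
        (fun B => 0 < (runs (ivl B) q true).card),
        (α (ivl B) q + 1) / 2 ^ ((runs (ivl B) q true).card)
      < ∑ B ∈ (runs (dom n) g true).filter
        (fun B => 0 < (runs (ivl B) p true).card),
        (α (ivl B) p + 1) / 2 ^ ((runs (ivl B) p true).card) := by
    rw [Finset.sum_filter, Finset.sum_filter]
    apply Finset.sum_lt_sum
    · intro B hB
      by_cases hne : B = A
      · subst hne
        rw [if_pos (by omega), if_pos hkpos]
        exact hstrict.le
      · rw [runs_congr (hother B hB hne) true,
          hα.restrict (ivl B) q p (hother B hB hne)]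
    · refine ⟨A, hA, ?_⟩
      rw [if_pos (by omega), if_pos hkpos]
      exact hstrict
  have hRpos : (0 : ℝ) < 1 / ((runs (dom n) g true).card : ℝ) := by
    have h0 : 0 < (runs (dom n) g true).card := Finset.card_pos.mpr ⟨A, hA⟩
    have h0' : (0 : ℝ) < ((runs (dom n) g true).card : ℝ) := by exact_mod_cast h0
    positivity
  have hmul := mul_lt_mul_of_pos_left hsum hRpos
  unfold LARM
  linarith

end TSAD
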